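/- Let E be a finite directed graph. If E⁰ is the union of a finite ascending chain of hereditary saturated subsets H₀ ⊂ H₁ ⊂ ⋯ ⊂ H_m = E⁰, where H₀ is the hereditary saturated closure of the set of line points of E and, for each j ≥ 0, H_{j+1} \ H_j is (in the quotient graph E \ H_j) the hereditary saturated closure of the set of vertices lying on cycles without exits, then no two distinct cycles of E share a common vertex. -/
import Mathlib


/-- Reachability by a directed path (possibly of length `0`). -/
def Reach {V E : Type*} (s r : E → V) : V → V → Prop :=
  Relation.ReflTransGen fun a b => ∃ e : E, s e = a ∧ r e = b

/-- A cycle in the directed graph `(V, E, s, r)`. -/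
structure GCycle {V E : Type*} (s r : E → V) where
  n : ℕ
  es : Fin (n + 1) → E
  chain : ∀ i : Fin n, r (es i.castSucc) = s (es i.succ)
  closed : r (es (Fin.last n)) = s (es 0)
  inj : Function.Injective fun i => s (es i)

/-- The set of vertices of a cycle. -/
def GCycle.verts {V E : Type*} {s r : E → V} (c : GCycle s r) : Set V :=
  Set.range fun i => s (c.es i)

/-- The set of edges of a cycle. -/
def GCycle.edges {V E : Type*} {s r : E → V} (c : GCycle s r) : Set E :=
  Set.range c.es

/-- `S` is hereditary in the restricted (quotient) graph on the vertex set `W`. -/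
def HeredIn {V E : Type*} (s r : E → V) (W S : Set V) : Prop :=
  ∀ e : E, s e ∈ S → r e ∈ W → r e ∈ S

/-- `S` is saturated in the restricted (quotient) graph on the vertex set `W`. -/
def SaturIn {V E : Type*} (s r : E → V) (W S : Set V) : Prop :=
  ∀ u ∈ W, {e : E | s e = u ∧ r e ∈ W}.Nonempty → {e : E | s e = u ∧ r e ∈ W}.Finite →
    (∀ e : E, s e = u → r e ∈ W → r e ∈ S) → u ∈ S

/-- The hereditary saturated closure of `X` computed in the restricted graph on `W`. -/
def SatClosureIn {V E : Type*} (s r : E → V) (W X : Set V) : Set V :=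
  ⋂₀ {S : Set V | X ⊆ S ∧ S ⊆ W ∧ HeredIn s r W S ∧ SaturIn s r W S}

/-- A bifurcation: a vertex emitting at least two edges. -/
def Bifur {V E : Type*} (s : E → V) (w : V) : Prop :=
  ∃ e f : E, e ≠ f ∧ s e = w ∧ s f = w

/-- `w` lies on a cycle. -/
def OnCyc {V E : Type*} (s r : E → V) (w : V) : Prop :=
  ∃ c : GCycle s r, w ∈ c.verts

/-- A line point: no vertex in its tree is a bifurcation or lies on a cycle. -/
def LinePoint {V E : Type*} (s r : E → V) (v : V) : Prop :=
  ∀ w : V, Reach s r v w → ¬ Bifur s w ∧ ¬ OnCyc s r w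

/-- The set of vertices lying on a cycle without exits in the restricted graph
on `W`. -/
def NoExitCycVerts {V E : Type*} (s r : E → V) (W : Set V) : Set V :=
  {u : V | ∃ c : GCycle s r, c.verts ⊆ W ∧ u ∈ c.verts ∧
    ∀ f : E, s f ∈ c.verts → r f ∈ W → f ∈ c.edges}

section Aux

variable {V E : Type*} {s r : E → V}

/-- One step in the restricted graph on `W`. -/
def StepW (s r : E → V) (W : Set V) (a b : V) : Prop :=
  ∃ e : E, s e = a ∧ r e = b ∧ b ∈ W

/-- Reachability in the restricted graph on `W`. -/
def ReachW (s r : E → V) (W : Set V) : V → V → Prop :=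
  Relation.ReflTransGen (StepW s r W)

/-- Cyclic successor on `Fin (n+1)`. -/
def cnxt (n : ℕ) (i : Fin (n + 1)) : Fin (n + 1) :=
  if h : (i : ℕ) < n then ⟨i + 1, by omega⟩ else 0

lemma GCycle.r_eq (c : GCycle s r) (i : Fin (c.n + 1)) :
    r (c.es i) = s (c.es (cnxt c.n i)) := by
  unfold cnxt
  by_cases h : (i : ℕ) < c.n
  · rw [dif_pos h]
    have := c.chain ⟨i, h⟩
    have h1 : (⟨(i : ℕ), h⟩ : Fin c.n).castSucc = i := by
      ext; simp
    have h2 : (⟨(i : ℕ), h⟩ : Fin c.n).succ = (⟨(i : ℕ) + 1, by omega⟩ : Fin (c.n + 1)) := by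
      ext; simp
    rw [h1, h2] at this
    exact this
  · rw [dif_neg h]
    have : i = Fin.last c.n := by ext; simp; omega
    rw [this]; exact c.closed

lemma cnxt_iter (n : ℕ) (i : Fin (n + 1)) :
    ∀ k : ℕ, (hk : (i : ℕ) + k ≤ n) → (cnxt n)^[k] i = ⟨(i : ℕ) + k, by omega⟩ := by
  intro k
  induction k generalizing i with
  | zero => intro _; ext; simp
  | succ k ih =>
    intro hk
    have hi : (i : ℕ) < n := by omega
    have h1 : cnxt n i = ⟨(i : ℕ) + 1, by omega⟩ := by unfold cnxt; rw [dif_pos hi]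
    rw [Function.iterate_succ_apply, h1, ih ⟨(i : ℕ) + 1, by omega⟩ (by simp; omega)]
    ext; simp; omega

lemma cnxt_iter_to_zero (n : ℕ) (i : Fin (n + 1)) :
    (cnxt n)^[n - (i : ℕ) + 1] i = 0 := by
  have h1 : (cnxt n)^[n - (i : ℕ)] i = ⟨n, by omega⟩ := by
    have := cnxt_iter n i (n - (i : ℕ)) (by omega)
    rw [this]; ext; simp; omega
  have : n - (i : ℕ) + 1 = 1 + (n - (i : ℕ)) := by omega
  rw [this, Function.iterate_add_apply, h1]
  simp [cnxt]

lemma cnxt_exists (n : ℕ) (i j : Fin (n + 1)) :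
    ∃ k : ℕ, (cnxt n)^[k] i = j := by
  refine ⟨(j : ℕ) + (n - (i : ℕ) + 1), ?_⟩
  rw [Function.iterate_add_apply, cnxt_iter_to_zero]
  have := cnxt_iter n 0 (j : ℕ) (by simp; omega)
  rw [this]; ext; simp

lemma GCycle.reachW (c : GCycle s r) {W : Set V} (hW : c.verts ⊆ W)
    (i j : Fin (c.n + 1)) : ReachW s r W (s (c.es i)) (s (c.es j)) := by
  obtain ⟨k, hk⟩ := cnxt_exists c.n i j
  subst hk
  induction k with
  | zero => exact Relation.ReflTransGen.refl
  | succ k ih =>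
    rw [Function.iterate_succ_apply']
    exact ih.tail ⟨c.es ((cnxt c.n)^[k] i), rfl, (c.r_eq _), hW ⟨_, rfl⟩⟩

/-- Membership in a hereditary set propagates along `ReachW`. -/
lemma reachW_mem {W X : Set V} (hX : HeredIn s r W X) {a b : V}
    (hab : ReachW s r W a b) (ha : a ∈ X) : b ∈ X := by
  induction hab with
  | refl => exact ha
  | tail _ hstep ih =>
    obtain ⟨e, he1, he2, he3⟩ := hstep
    rw [← he2]; exact hX e (he1 ▸ ih) (he2 ▸ he3)

end Aux

section Closure

variable {V E : Type*} {s r : E → V}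

lemma satClosure_subset_mem {W X S : Set V} (hXS : X ⊆ S) (hSW : S ⊆ W)
    (hH : HeredIn s r W S) (hS : SaturIn s r W S) :
    SatClosureIn s r W X ⊆ S :=
  Set.sInter_subset_of_mem ⟨hXS, hSW, hH, hS⟩

lemma subset_satClosure {W X : Set V} : X ⊆ SatClosureIn s r W X := by
  intro v hv
  exact Set.mem_sInter.2 fun S hS => hS.1 hv

lemma satClosure_subset {W X : Set V} (hXW : X ⊆ W) : SatClosureIn s r W X ⊆ W :=
  Set.sInter_subset_of_mem ⟨hXW, subset_rfl, fun _ _ h => h, fun u hu _ _ _ => hu⟩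

lemma satClosure_hered {W X : Set V} : HeredIn s r W (SatClosureIn s r W X) := by
  intro e he hr
  exact Set.mem_sInter.2 fun S hS => hS.2.2.1 e (Set.mem_sInter.1 he S hS) hr

lemma satClosure_satur {W X : Set V} : SaturIn s r W (SatClosureIn s r W X) := by
  intro u hu hne hfin hall
  exact Set.mem_sInter.2 fun S hS =>
    hS.2.2.2 u hu hne hfin fun e h1 h2 => Set.mem_sInter.1 (hall e h1 h2) S hS

/-- Key fact: a vertex on a closed path (within `W`) lying in the saturated
closure of a hereditary set `X` already belongs to `X`. -/
lemma closure_cycle_mem [Fintype E] {W X : Set V} (hXW : X ⊆ W) (hX : HeredIn s r W X)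
    {v : V} (hv : v ∈ SatClosureIn s r W X)
    (hcyc : ∃ e : E, s e = v ∧ r e ∈ W ∧ ReachW s r W (r e) v) : v ∈ X := by
  by_cases hvX : v ∈ X
  · exact hvX
  exfalso
  set C := SatClosureIn s r W X with hC
  -- vertices that can reach (within `W`) a vertex outside `X` lying on a closed walk
  set R : Set V := {u | ∃ w, ReachW s r W u w ∧
      (∃ e : E, s e = w ∧ r e ∈ W ∧ ReachW s r W (r e) w) ∧ w ∉ X} with hR
  have hmem : C ⊆ X ∪ (C \ R) := by
    apply satClosure_subset_mem
    · exact Set.subset_union_left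
    · rintro u (hu | hu)
      · exact hXW hu
      · exact satClosure_subset hXW hu.1
    · -- hereditary
      intro e he hrW
      rcases he with he | he
      · exact Or.inl (hX e he hrW)
      · refine Or.inr ⟨satClosure_hered e he.1 hrW, fun hrR => he.2 ?_⟩
        obtain ⟨w, hw1, hw2, hw3⟩ := hrR
        exact ⟨w, Relation.ReflTransGen.head ⟨e, rfl, rfl, hrW⟩ hw1, hw2, hw3⟩
    · -- saturated
      intro u hu hne hfin hall
      have huC : u ∈ C := satClosure_satur u hu hne hfin fun e h1 h2 =>
        ((hall e h1 h2).elim (fun h => subset_satClosure h) (fun h => h.1))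
      by_cases huR : u ∈ R
      · exfalso
        obtain ⟨w, hw1, hw2, hw3⟩ := huR
        rcases (Relation.ReflTransGen.cases_head hw1) with heq | ⟨v₁, hstep, hreach⟩
        · -- u = w : u itself lies on a closed walk, u ∉ X
          subst heq
          obtain ⟨e, he1, he2, he3⟩ := hw2
          rcases hall e he1 he2 with h | h
          · exact hw3 (reachW_mem hX he3 h)
          · exact h.2 ⟨u, he3, ⟨e, he1, he2, he3⟩, hw3⟩
        · obtain ⟨e, he1, he2, he3⟩ := hstep
          rcases hall e he1 (he2 ▸ he3) with h | h
          · exact hw3 (reachW_mem hX hreach (he2 ▸ h))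
          · exact h.2 ⟨w, he2 ▸ hreach, hw2, hw3⟩
      · exact Or.inr ⟨huC, huR⟩
  rcases hmem hv with h | h
  · exact hvX h
  · exact h.2 ⟨v, Relation.ReflTransGen.refl, hcyc, hvX⟩

end Closure

section Cycles

variable {V E : Type*} {s r : E → V}

lemma noExit_subset {W : Set V} : NoExitCycVerts s r W ⊆ W := by
  rintro u ⟨c, hcW, hu, _⟩
  exact hcW hu

lemma noExit_hered {W : Set V} : HeredIn s r W (NoExitCycVerts s r W) := by
  rintro e ⟨c, hcW, hse, hnoex⟩ hrW
  obtain ⟨j, hj⟩ := hnoex e hse hrW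
  refine ⟨c, hcW, ⟨cnxt c.n j, ?_⟩, hnoex⟩
  show s (c.es (cnxt c.n j)) = r e
  rw [← c.r_eq j, hj]

/-- A cycle contained in `W` sharing a vertex with a no-exit cycle `d` in `W`
has the same edges as `d`. -/
lemma eq_edges_of_noExit {W : Set V} (c d : GCycle s r) (hcW : c.verts ⊆ W)
    (hdW : d.verts ⊆ W)
    (hnoex : ∀ f : E, s f ∈ d.verts → r f ∈ W → f ∈ d.edges)
    {i₀ : Fin (c.n + 1)} {j₀ : Fin (d.n + 1)}
    (hv : s (c.es i₀) = s (d.es j₀)) : c.edges = d.edges := by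
  -- the unique edge of `d` out of a vertex of `d`
  have key : ∀ (i : Fin (c.n + 1)) (j : Fin (d.n + 1)),
      s (c.es i) = s (d.es j) → c.es i = d.es j := by
    intro i j hij
    obtain ⟨j', hj'⟩ := hnoex (c.es i) (hij ▸ ⟨j, rfl⟩) (by rw [c.r_eq]; exact hcW ⟨_, rfl⟩)
    have : j' = j := d.inj (by simpa [hj'] using hij)
    rw [← hj', this]
  -- `c` follows `d` step by step
  have main : ∀ k : ℕ, c.es ((cnxt c.n)^[k] i₀) = d.es ((cnxt d.n)^[k] j₀) := by
    intro k
    induction k with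
    | zero => exact key i₀ j₀ hv
    | succ k ih =>
      rw [Function.iterate_succ_apply', Function.iterate_succ_apply']
      apply key
      rw [← c.r_eq, ← d.r_eq, ih]
  ext e
  constructor
  · rintro ⟨i, rfl⟩
    obtain ⟨k, hk⟩ := cnxt_exists c.n i₀ i
    exact ⟨(cnxt d.n)^[k] j₀, by rw [← main k, hk]⟩
  · rintro ⟨j, rfl⟩
    obtain ⟨k, hk⟩ := cnxt_exists d.n j₀ j
    exact ⟨(cnxt c.n)^[k] i₀, by rw [main k, hk]⟩

end Cycles


/-- Let `E` be a finite graph whose vertex set is the union of a strictly ascending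
finite chain of hereditary saturated subsets `H₀ ⊂ ⋯ ⊂ H_m = E⁰`, where `H₀` is the
hereditary saturated closure of the line points and each `H_{j+1} \ H_j` is, in the
quotient graph `E \ H_j`, the hereditary saturated closure of the vertices on cycles
without exits. Then no two distinct cycles of `E` share a common vertex. -/
theorem no_common_vertex_of_filtration {V E : Type*} [Fintype V] [Fintype E]
    (s r : E → V) (m : ℕ) (H : Fin (m + 1) → Set V)
    (hchain : ∀ j : Fin m, H j.castSucc ⊂ H j.succ)
    (htop : H (Fin.last m) = Set.univ)
    (hhs : ∀ j, HeredIn s r Set.univ (H j) ∧ SaturIn s r Set.univ (H j))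
    (h0 : H 0 = SatClosureIn s r Set.univ {v : V | LinePoint s r v})
    (hstep : ∀ j : Fin m, H j.succ \ H j.castSucc =
      SatClosureIn s r (H j.castSucc)ᶜ (NoExitCycVerts s r (H j.castSucc)ᶜ)) :
    ∀ c c' : GCycle s r, (c.verts ∩ c'.verts).Nonempty → c.edges = c'.edges := by
  rintro c c' ⟨v, ⟨i₀, hi₀⟩, ⟨i₀', hi₀'⟩⟩
  simp only at hi₀ hi₀'
  -- `v` is not in `H 0`, since line points do not lie on cycles
  have hnot0 : v ∉ H 0 := by
    intro hv0
    rw [h0] at hv0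
    have hLP : LinePoint s r v := by
      refine closure_cycle_mem (Set.subset_univ _) ?_ hv0 ?_
      · intro e he _
        intro w hw
        exact he w (Relation.ReflTransGen.head ⟨e, rfl, rfl⟩ hw)
      · refine ⟨c.es i₀, hi₀, Set.mem_univ _, ?_⟩
        rw [c.r_eq, ← hi₀]
        exact c.reachW (Set.subset_univ _) _ _
    exact (hLP v Relation.ReflTransGen.refl).2 ⟨c, ⟨i₀, hi₀⟩⟩
  -- find the transition level
  obtain ⟨k, hk1, hk2⟩ : ∃ k : Fin m, v ∉ H k.castSucc ∧ v ∈ H k.succ := by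
    by_contra hcon
    push_neg at hcon
    have key : ∀ n : ℕ, (hn : n ≤ m) → v ∈ H ⟨n, by omega⟩ → False := by
      intro n
      induction n with
      | zero =>
        intro _ h
        rw [show (0 : Fin (m+1)) = ⟨0, by omega⟩ by ext; simp] at hnot0
        exact hnot0 h
      | succ n ih =>
        intro hn h
        by_cases h' : v ∈ H ⟨n, by omega⟩
        · exact ih (by omega) h'
        · exact hcon ⟨n, by omega⟩ h' h
    exact key m le_rfl (by rw [show (⟨m, by omega⟩ : Fin (m+1)) = Fin.last m from rfl, htop]; trivial)
  set W : Set V := (H k.castSucc)ᶜ with hW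
  -- any cycle through `v` lies in `W`
  have hcsub : ∀ (c'' : GCycle s r) (i : Fin (c''.n + 1)), s (c''.es i) = v →
      c''.verts ⊆ W := by
    rintro c'' i hi u' ⟨i', hi'⟩ hmem
    have hi'' : s (c''.es i') = u' := hi'
    exact hk1 (hi ▸ reachW_mem (hhs k.castSucc).1
      (c''.reachW (Set.subset_univ _) i' i) (hi''.symm ▸ hmem))
  have hvW : v ∈ SatClosureIn s r W (NoExitCycVerts s r W) := by
    rw [← hstep k]
    exact ⟨hk2, hk1⟩
  have hcW : c.verts ⊆ W := hcsub c i₀ hi₀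
  have hc'W : c'.verts ⊆ W := hcsub c' i₀' hi₀'
  -- `v` lies on a no-exit cycle `d` in `W`
  have hvne : v ∈ NoExitCycVerts s r W := by
    refine closure_cycle_mem noExit_subset noExit_hered hvW ?_
    refine ⟨c.es i₀, hi₀, ?_, ?_⟩
    · rw [c.r_eq]; exact hcW ⟨_, rfl⟩
    · rw [c.r_eq, ← hi₀]
      exact c.reachW hcW _ _
  obtain ⟨d, hdW, ⟨j₀, hj₀⟩, hnoex⟩ := hvne
  simp only at hj₀
  rw [eq_edges_of_noExit c d hcW hdW hnoex (hi₀.trans hj₀.symm),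
    eq_edges_of_noExit c' d hc'W hdW hnoex (hi₀'.trans hj₀.symm)]
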